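/- Let f : A → B be a functor and let C be its pseudocolimit (mapping iso-cylinder), with injections i : A → C, j : B → C and a natural isomorphism λ : i ≅ j ∘ f. Then the induced functor e : C → B satisfying e∘i = f, e∘j = 1_B and e(λ) = id is an isofibration and an equivalence of categories; indeed there is a natural isomorphism ε : j∘e ≅ 1_C with ε ▷ j and e ◁ ε identities, so e is a retract equivalence. -/

import Mathlib

open CategoryTheory

universe v u₁ u₂

/-- A functor is an isofibration if isomorphisms lift strictly on one endpoint. -/
def IsIsofibration {E : Type u₁} {B : Type u₂} [Category.{v} E] [Category.{v} B]
    (p : E ⥤ B) : Prop :=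
  ∀ (e : E) (b : B) (β : b ≅ p.obj e),
    ∃ (e' : E) (ε : e' ≅ e) (h : p.obj e' = b), p.map ε.hom = eqToHom h ≫ β.hom

variable {A : Type u₁} {B : Type u₂} [Category.{v} A] [Category.{v} B]

/-- The pseudocolimit (mapping iso-cylinder) of a functor `f : A ⥤ B`:
objects are `A ⊕ B`, with hom-sets induced from `B` via `Sum.elim f.obj id`. -/
def Cyl (f : A ⥤ B) := InducedCategory B (Sum.elim f.obj id)

instance (f : A ⥤ B) : Category (Cyl f) where
  Hom X Y := Sum.elim f.obj id X ⟶ Sum.elim f.obj id Y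
  id X := 𝟙 (Sum.elim f.obj id X)
  comp a b := a ≫ b
  id_comp := Category.id_comp
  comp_id := Category.comp_id
  assoc := Category.assoc

/-- The injection `i : A ⥤ C`. -/
def cylI (f : A ⥤ B) : A ⥤ Cyl f where
  obj a := Sum.inl a
  map α := f.map α

/-- The injection `j : B ⥤ C`. -/
def cylJ (f : A ⥤ B) : B ⥤ Cyl f where
  obj b := Sum.inr b
  map β := β

/-- The induced functor `e : C ⥤ B`. -/
def cylE (f : A ⥤ B) : Cyl f ⥤ B where
  obj := Sum.elim f.obj id
  map g := g

/-- The canonical natural isomorphism `λ : i ≅ j ∘ f`. -/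
def cylLam (f : A ⥤ B) : cylI f ≅ f ⋙ cylJ f :=
  NatIso.ofComponents
    (fun a => ⟨𝟙 (f.obj a), 𝟙 (f.obj a), Category.comp_id _, Category.comp_id _⟩)
    (by intro a a' α; exact (Category.comp_id _).trans (Category.id_comp _).symm)

/-- The induced functor `e : C ⥤ B` from the pseudocolimit of `f`, satisfying
`e ∘ i = f`, `e ∘ j = 1_B` and `e(λ) = id`, is an isofibration and an
equivalence of categories; indeed there is `ε : j ∘ e ≅ 1_C` with `ε ▷ j` and
`e ◁ ε` identities, so `e` is a retract equivalence. -/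
theorem cylE_retract_equivalence (f : A ⥤ B) :
    cylI f ⋙ cylE f = f ∧
    cylJ f ⋙ cylE f = 𝟭 B ∧
    (∀ a : A, (cylE f).map ((cylLam f).hom.app a) = 𝟙 (f.obj a)) ∧
    IsIsofibration (cylE f) ∧ (cylE f).IsEquivalence ∧
    ∃ ε : cylE f ⋙ cylJ f ≅ 𝟭 (Cyl f),
      (∀ b : B, ε.hom.app ((cylJ f).obj b) = 𝟙 ((cylJ f).obj b)) ∧
      (∀ c : Cyl f, (cylE f).map (ε.hom.app c) = 𝟙 ((cylE f).obj c)) := by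
  refine ⟨rfl, rfl, fun a => rfl, ?_, ?_, ?_⟩
  · intro c b β
    exact ⟨Sum.inr b, ⟨β.hom, β.inv, β.hom_inv_id, β.inv_hom_id⟩, rfl,
      (Category.id_comp _).symm⟩
  · have : (cylE f).EssSurj := ⟨fun b => ⟨Sum.inr b, ⟨Iso.refl b⟩⟩⟩
    have : (cylE f).Full := ⟨fun g => ⟨g, rfl⟩⟩
    have : (cylE f).Faithful := ⟨fun h => h⟩
    exact { }
  · refine ⟨NatIso.ofComponents
      (fun c => ⟨𝟙 (Sum.elim f.obj id c), 𝟙 _, Category.comp_id _, Category.comp_id _⟩)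
      (fun α => (Category.comp_id _).trans (Category.id_comp _).symm), fun b => rfl, fun c => rfl⟩
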